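/- arXiv:math/0303313 — 2 statements merged into one kernel-verified Lean document; each statement's English description precedes it below -/
import Mathlib

section
/- Glivenko's theorem (algebraic form), underpinning the recapture of classical logic K within intuitionistic logic J: a propositional formula φ evaluates to ⊤ under every valuation of its atoms in every Boolean algebra if and only if its double negation ¬¬φ evaluates to ⊤ under every valuation of its atoms in every Heyting algebra. -/
/-- Propositional formulae over a set `A` of atoms, closed under the
connectives ⊥, ∧, ∨, →. -/
inductive PropForm (A : Type) where
  | atom : A → PropForm A
  | bot : PropForm A
  | and : PropForm A → PropForm A → PropForm A
  | or : PropForm A → PropForm A → PropForm A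
  | imp : PropForm A → PropForm A → PropForm A

/-- Negation `¬φ` abbreviates `φ → ⊥`. -/
def PropForm.neg {A : Type} (φ : PropForm A) : PropForm A := .imp φ .bot

/-- The evaluation of a formula in a Heyting algebra `H` under a valuation
`v : A → H` of its atoms: ⊥ is the bottom element, ∧ is meet, ∨ is join, and
→ is Heyting implication. -/
def PropForm.eval {A H : Type} [HeytingAlgebra H] (v : A → H) : PropForm A → H
  | .atom a => v a
  | .bot => ⊥
  | .and φ ψ => φ.eval v ⊓ ψ.eval v
  | .or φ ψ => φ.eval v ⊔ ψ.eval v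
  | .imp φ ψ => φ.eval v ⇨ ψ.eval v

/-! The regular elements `a = aᶜᶜ` of a Heyting algebra `H` form a Boolean algebra, and
`a ↦ aᶜᶜ` preserves ⊥, ⊓, ⊔ and ⇨ into it. So evaluating `φ` there under `aᶜᶜ ∘ v` gives the
double negation of its value under `v`, which is therefore ⊤ whenever `φ` is a Boolean
tautology. Conversely, in a Boolean algebra `¬¬φ` and `φ` have the same value. -/

namespace PropForm

variable {A H : Type} [HeytingAlgebra H]

@[simp]
theorem eval_neg (v : A → H) (φ : PropForm A) : φ.neg.eval v = (φ.eval v)ᶜ :=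
  himp_bot _

theorem coe_eval_toRegular (v : A → H) (φ : PropForm A) :
    ((φ.eval fun a => Heyting.Regular.toRegular (v a) : Heyting.Regular H) : H) =
      (φ.eval v)ᶜᶜ := by
  -- `rw [Heyting.Regular.coe_inf]` would not fire: `eval` reaches the lattice operations of
  -- `Heyting.Regular H` through its `BooleanAlgebra` instance, equal to them only up to unfolding.
  induction φ with
  | atom a => rfl
  | bot => exact Heyting.Regular.coe_bot.trans (by rw [eval, compl_bot, compl_top])
  | and φ ψ ihφ ihψ =>
    refine (Heyting.Regular.coe_inf _ _).trans ?_
    rw [ihφ, ihψ, eval, compl_compl_inf_distrib]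
  | or φ ψ ihφ ihψ =>
    refine (Heyting.Regular.coe_sup _ _).trans ?_
    rw [ihφ, ihψ, eval, compl_sup, compl_sup, compl_compl_compl, compl_compl_compl]
  | imp φ ψ ihφ ihψ =>
    refine (Heyting.Regular.coe_himp _ _).trans ?_
    rw [ihφ, ihψ, eval, compl_compl_himp_distrib]

end PropForm

/-- Glivenko's theorem (algebraic form): `φ` evaluates to ⊤ under every valuation
in every Boolean algebra iff `¬¬φ` evaluates to ⊤ under every valuation in every
Heyting algebra. -/
theorem glivenko {A : Type} (φ : PropForm A) :
    (∀ (B : Type) [BooleanAlgebra B], ∀ v : A → B, φ.eval v = ⊤) ↔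
    (∀ (H : Type) [HeytingAlgebra H], ∀ v : A → H, (φ.neg.neg).eval v = ⊤) := by
  constructor
  · intro hBool H _ v
    rw [PropForm.eval_neg, PropForm.eval_neg, ← PropForm.coe_eval_toRegular, hBool,
      Heyting.Regular.coe_top]
  · intro hHeyting B _ v
    simpa only [PropForm.eval_neg, compl_compl] using hHeyting B v
end

section
/- Foulis–Holland theorem, underpinning the recapture of classical logic within quantum logic via the compatibility constraint: let L be an orthomodular lattice, i.e. a bounded lattice with an orthocomplementation x ↦ xᶜ (order-reversing, involutive, with x ⊓ xᶜ = ⊥ and x ⊔ xᶜ = ⊤) satisfying the orthomodular law a ≤ b → b = a ⊔ (b ⊓ aᶜ). Say a commutes with b (a and b are compatible) iff a = (a ⊓ b) ⊔ (a ⊓ bᶜ). If a, b, c ∈ L pairwise commute, then distributivity holds among them: a ⊓ (b ⊔ c) = (a ⊓ b) ⊔ (a ⊓ c). -/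
/-- `a` commutes with `b` (they are compatible) with respect to the
orthocomplementation `compl` iff `a = (a ⊓ b) ⊔ (a ⊓ bᶜ)`. -/
def Commutes {L : Type*} [Lattice L] (compl : L → L) (a b : L) : Prop :=
  a = (a ⊓ b) ⊔ (a ⊓ compl b)

/-- Foulis–Holland theorem: in an orthomodular lattice — a bounded lattice with an
orthocomplementation `x ↦ xᶜ` (order-reversing, involutive, with `x ⊓ xᶜ = ⊥` and
`x ⊔ xᶜ = ⊤`) satisfying the orthomodular law `a ≤ b → b = a ⊔ (b ⊓ aᶜ)` — if
`a`, `b`, `c` pairwise commute, then `a ⊓ (b ⊔ c) = (a ⊓ b) ⊔ (a ⊓ c)`. -/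
theorem foulis_holland {L : Type*} [Lattice L] [BoundedOrder L] (compl : L → L)
    (h_anti : ∀ x y : L, x ≤ y → compl y ≤ compl x)
    (h_invol : ∀ x : L, compl (compl x) = x)
    (h_inf_compl : ∀ x : L, x ⊓ compl x = ⊥)
    (h_sup_compl : ∀ x : L, x ⊔ compl x = ⊤)
    (h_orthomodular : ∀ a b : L, a ≤ b → b = a ⊔ (b ⊓ compl a))
    (a b c : L)
    (hab : Commutes compl a b) (hba : Commutes compl b a)
    (hac : Commutes compl a c) (hca : Commutes compl c a)
    (hbc : Commutes compl b c) (hcb : Commutes compl c b) :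
    a ⊓ (b ⊔ c) = (a ⊓ b) ⊔ (a ⊓ c) := by
  -- De Morgan laws
  have dm_sup : ∀ x y : L, compl (x ⊔ y) = compl x ⊓ compl y := by
    intro x y
    apply le_antisymm
    · exact le_inf (h_anti _ _ le_sup_left) (h_anti _ _ le_sup_right)
    · have hx : x ≤ compl (compl x ⊓ compl y) := by
        have := h_anti _ _ (inf_le_left : compl x ⊓ compl y ≤ compl x)
        rwa [h_invol] at this
      have hy : y ≤ compl (compl x ⊓ compl y) := by
        have := h_anti _ _ (inf_le_right : compl x ⊓ compl y ≤ compl y)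
        rwa [h_invol] at this
      have := h_anti _ _ (sup_le hx hy)
      rwa [h_invol] at this
  -- dual orthomodular law : u ≤ d → u = d ⊓ (u ⊔ compl d)
  have dualOM : ∀ u d : L, u ≤ d → u = d ⊓ (u ⊔ compl d) := by
    intro u d hud
    have h1 : compl u = compl d ⊔ (compl u ⊓ compl (compl d)) :=
      h_orthomodular (compl d) (compl u) (h_anti _ _ hud)
    rw [h_invol d] at h1
    have h2 := congrArg compl h1
    rw [h_invol, dm_sup, h_invol] at h2
    -- h2 : u = d ⊓ compl (compl u ⊓ d)
    have h3 : compl (compl u ⊓ d) = u ⊔ compl d := by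
      have : compl u ⊓ d = compl (u ⊔ compl d) := by
        rw [dm_sup, h_invol]
      rw [this, h_invol]
    rw [h3] at h2
    exact h2
  set e : L := (a ⊓ b) ⊔ (a ⊓ c) with he
  set m : L := (compl a ⊓ b) ⊔ (compl a ⊓ c) with hm
  -- decomposition of b ⊔ c
  have hbc_eq : b ⊔ c = e ⊔ m := by
    conv_lhs => rw [hba, hca]
    rw [he, hm, inf_comm b a, inf_comm b (compl a), inf_comm c a, inf_comm c (compl a)]
    exact sup_sup_sup_comm _ _ _ _
  have hea : e ≤ a := sup_le inf_le_left inf_le_left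
  have hma : m ≤ compl a := sup_le inf_le_left inf_le_left
  have hme : m ≤ compl e := le_trans hma (h_anti _ _ hea)
  -- (e ⊔ m) ⊓ compl e = m
  have hkey : (e ⊔ m) ⊓ compl e = m := by
    have h1 : m = (e ⊔ m) ⊓ (m ⊔ compl (e ⊔ m)) := dualOM m (e ⊔ m) le_sup_right
    have h2 : m ⊔ compl (e ⊔ m) = compl e := by
      rw [dm_sup]
      exact (h_orthomodular m (compl e) hme).symm
    rw [h2] at h1
    exact h1.symm
  -- main computation
  rw [hbc_eq]
  have het : e ≤ a ⊓ (e ⊔ m) := le_inf hea le_sup_left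
  have h4 : a ⊓ (e ⊔ m) = e ⊔ ((a ⊓ (e ⊔ m)) ⊓ compl e) := h_orthomodular e _ het
  have h5 : (a ⊓ (e ⊔ m)) ⊓ compl e = ⊥ := by
    have : (a ⊓ (e ⊔ m)) ⊓ compl e = a ⊓ ((e ⊔ m) ⊓ compl e) := inf_assoc ..
    rw [this, hkey]
    exact le_antisymm (le_trans (inf_le_inf_left a hma) (h_inf_compl a).le) bot_le
  rw [h4, h5, sup_bot_eq]
end
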